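/- arXiv:1307.5303 — 7 statements merged into one kernel-verified Lean document; each statement's English description precedes it below -/
import Mathlib

section
/- Let A be a unital commutative C*-algebra, G a topological group, and Θ : G → Aut(A) an anti-homomorphism with associated action Φ(g, χ) = χ ∘ Θ(g) on Spec(A). If Φ : G × Spec(A) → Spec(A) is jointly continuous, then Θ is continuous in the sense that for each a ∈ A the map g ↦ Θ(g)(a) is continuous from G to A. -/
open WeakDual

/-- Let `A` be a unital commutative C*-algebra, `G` a topological group and
`Θ : G → Aut(A)` an anti-homomorphism with associated action
`Φ(g, χ) = χ ∘ Θ(g)` on `Spec(A)`.  If `Φ` is jointly continuous, then for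
every `a ∈ A` the map `g ↦ Θ(g)(a)` is continuous. -/
theorem stmt4 {A : Type*} [NormedCommRing A] [NormedAlgebra ℂ A] [CompleteSpace A]
    [StarRing A] [CStarRing A] [StarModule ℂ A]
    {G : Type*} [Group G] [TopologicalSpace G] [IsTopologicalGroup G]
    (Θ : G → (A ≃⋆ₐ[ℂ] A))
    (hΘ : ∀ g h : G, Θ (g * h) = (Θ g).trans (Θ h))
    (Φ : G → characterSpace ℂ A → characterSpace ℂ A)
    (hΦ : ∀ (g : G) (χ : characterSpace ℂ A) (a : A), (Φ g χ : A → ℂ) a = χ ((Θ g) a))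
    (hcont : Continuous fun p : G × characterSpace ℂ A => Φ p.1 p.2) :
    ∀ a : A, Continuous fun g : G => (Θ g) a := by
  letI : CStarAlgebra A := ⟨⟩
  letI : CommCStarAlgebra A := ⟨⟩
  intro a
  have heval : Continuous fun p : G × characterSpace ℂ A => (Φ p.1 p.2 : A → ℂ) a := by
    exact (WeakDual.eval_continuous a).comp (continuous_subtype_val.comp hcont)
  let F : C(G × characterSpace ℂ A, ℂ) := ⟨_, heval⟩
  have hcurry : Continuous fun g => F.curry g := F.curry.continuous
  have key : ∀ g, F.curry g = gelfandStarTransform A ((Θ g) a) := by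
    intro g
    ext χ
    simp only [ContinuousMap.curry_apply, ContinuousMap.coe_mk, F]
    rw [hΦ]
    rfl
  have hiso : Isometry (gelfandStarTransform A) := gelfandTransform_isometry A
  have hsymm : Isometry (gelfandStarTransform A).symm := by
    intro x y
    rw [← hiso.edist_eq ((gelfandStarTransform A).symm x) ((gelfandStarTransform A).symm y)]
    rw [(gelfandStarTransform A).apply_symm_apply, (gelfandStarTransform A).apply_symm_apply]
  have : Continuous fun g => (gelfandStarTransform A).symm (F.curry g) :=
    hsymm.continuous.comp hcurry
  convert this using 2 with g
  rw [key g, StarAlgEquiv.symm_apply_apply]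
end

section
/- Let X be a set and A ⊆ B(X) a C*-subalgebra of the bounded complex-valued functions on X with the sup norm. Let X_A = {x ∈ X : ∃ f ∈ A, f(x) ≠ 0} and let ι : X_A → Spec(A) be the evaluation map ι(x)(f) = f(x). Then the image ι(X_A) is dense in Spec(A). -/
set_option maxHeartbeats 1000000

open WeakDual BoundedContinuousFunction

/-- Let `X` be a set (a type with the discrete topology, so that `X →ᵇ ℂ` is the
C*-algebra `B(X)` of bounded functions on `X`) and `A ⊆ B(X)` a C*-subalgebra.
Then the image of `X_A = {x | ∃ f ∈ A, f x ≠ 0}` under the evaluation map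
`ι(x)(f) = f(x)` is dense in `Spec(A)`. -/
theorem stmt6 {X : Type*} [TopologicalSpace X] [DiscreteTopology X]
    (A : StarSubalgebra ℂ (X →ᵇ ℂ)) (hA : IsClosed (A : Set (X →ᵇ ℂ))) :
    ∃ ι : {x : X // ∃ f ∈ A, f x ≠ 0} → characterSpace ℂ A,
      (∀ (x : {x : X // ∃ f ∈ A, f x ≠ 0}) (f : A), (ι x : A → ℂ) f = (f : X →ᵇ ℂ) x.1) ∧
      DenseRange ι := by
  classical
  haveI : CompactSpace (characterSpace ℂ A) := inferInstance
  haveI hns : NormalSpace (characterSpace ℂ A) := inferInstance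
  haveI : IsClosed ((A : Set (X →ᵇ ℂ))) := hA
  -- the evaluation character
  set ev : {x : X // ∃ f ∈ A, f x ≠ 0} → (A →L[ℂ] ℂ) := fun x =>
    (BoundedContinuousFunction.evalCLM ℂ x.1).comp (A.toSubalgebra.toSubmodule.subtypeL) with hev
  have hmem : ∀ x, (ev x : WeakDual ℂ A) ∈ characterSpace ℂ A := by
    intro x
    refine ⟨?_, fun f g => rfl⟩
    obtain ⟨f, hfA, hfx⟩ := x.2
    intro h0
    have : ev x ⟨f, hfA⟩ = 0 := by rw [h0]; rfl
    exact hfx this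
  refine ⟨fun x => ⟨ev x, hmem x⟩, fun x f => rfl, ?_⟩
  set ι : {x : X // ∃ f ∈ A, f x ≠ 0} → characterSpace ℂ A := fun x => ⟨ev x, hmem x⟩ with hι
  rw [denseRange_iff_closure_range]
  by_contra hK
  obtain ⟨φ, hφ⟩ : ∃ φ : characterSpace ℂ A, φ ∉ closure (Set.range ι) := by
    by_contra h
    push_neg at h
    exact hK (Set.eq_univ_of_forall h)
  obtain ⟨g, hg0, hg1, -⟩ := exists_continuous_zero_one_of_isClosed
    isClosed_closure (isClosed_singleton (x := φ))
    (Set.disjoint_singleton_right.mpr hφ)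
  set gc : C(characterSpace ℂ A, ℂ) :=
    (ContinuousMap.mk Complex.ofReal Complex.continuous_ofReal).comp g with hgc
  set f : A := (gelfandStarTransform A).symm gc with hf
  have hft : gelfandStarTransform A f = gc := (gelfandStarTransform A).apply_symm_apply gc
  have hfzero : (f : X →ᵇ ℂ) = 0 := by
    ext x
    by_cases hx : ∃ h ∈ A, h x ≠ 0
    · have h1 : ι ⟨x, hx⟩ ∈ closure (Set.range ι) := subset_closure ⟨⟨x, hx⟩, rfl⟩
      have h2 : gc (ι ⟨x, hx⟩) = 0 := by
        simp [hgc, hg0 h1]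
      have h3 : gc (ι ⟨x, hx⟩) = (f : X →ᵇ ℂ) x := by
        rw [← hft]
        rfl
      rw [← h3, h2]; rfl
    · push_neg at hx
      simpa using hx f f.2
  have hf0 : f = 0 := Subtype.ext hfzero
  have : gc φ = 0 := by rw [← hft, hf0]; simp
  rw [hgc] at this
  simp [hg1 rfl] at this
end

section
/- In the setting where A ⊆ B(X) is a unital C*-subalgebra, υ : Y → X a map and R the closure of υ*(A) in B(Y): the image of the induced embedding Spec(R) → Spec(A) equals the closure in Spec(A) of the set of evaluation functionals {ev_x : x ∈ υ(Y)}. -/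
open WeakDual BoundedContinuousFunction

set_option maxHeartbeats 1000000
set_option synthInstance.maxHeartbeats 1000000

/-- In the setting of a unital C*-subalgebra `A ⊆ B(X)`, a map `υ : Y → X` and
`R ⊆ B(Y)` the closure of `υ*(A)`: the image of the induced map
`Spec(R) → Spec(A)`, `χ ↦ χ ∘ υ*`, equals the closure in `Spec(A)` of the set of
evaluation functionals at points of `υ(Y)`. -/
theorem stmt8 {X Y : Type*} [TopologicalSpace X] [DiscreteTopology X]
    [TopologicalSpace Y] [DiscreteTopology Y]
    (A : StarSubalgebra ℂ (X →ᵇ ℂ)) (hA : IsClosed (A : Set (X →ᵇ ℂ)))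
    (υ : Y → X) (R : StarSubalgebra ℂ (Y →ᵇ ℂ))
    (hR : (R : Set (Y →ᵇ ℂ)) =
      closure {g : Y →ᵇ ℂ | ∃ f ∈ A, ∀ y : Y, g y = f (υ y)})
    (evX : X → characterSpace ℂ A)
    (hevX : ∀ (x : X) (f : A), (evX x : A → ℂ) f = (f : X →ᵇ ℂ) x)
    (F : characterSpace ℂ R → characterSpace ℂ A)
    -- `F χ = χ ∘ υ*`: for `f ∈ A` and `g ∈ R` with `g = f ∘ υ` one has `F χ (f) = χ (g)`
    (hF : ∀ (χ : characterSpace ℂ R) (f : A) (g : R),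
      (∀ y : Y, (g : Y →ᵇ ℂ) y = (f : X →ᵇ ℂ) (υ y)) → (F χ : A → ℂ) f = (χ : R → ℂ) g) :
    Set.range F = closure (Set.range (evX ∘ υ)) := by
  classical
  have hRclosed : IsClosed (R : Set (Y →ᵇ ℂ)) := by rw [hR]; exact isClosed_closure
  haveI : IsClosed ((R : StarSubalgebra ℂ (Y →ᵇ ℂ)) : Set (Y →ᵇ ℂ)) := hRclosed
  -- pullback ρ : A → R
  have pullmem : ∀ f : A,
      ((f : X →ᵇ ℂ).compContinuous ⟨υ, continuous_of_discreteTopology⟩) ∈ R := by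
    intro f
    have h1 : ((f : X →ᵇ ℂ).compContinuous ⟨υ, continuous_of_discreteTopology⟩)
        ∈ {g : Y →ᵇ ℂ | ∃ f ∈ A, ∀ y : Y, g y = f (υ y)} :=
      ⟨(f : X →ᵇ ℂ), f.2, fun y => rfl⟩
    have := subset_closure h1
    rw [← hR] at this
    exact this
  set ρ : A → R := fun f =>
    ⟨(f : X →ᵇ ℂ).compContinuous ⟨υ, continuous_of_discreteTopology⟩, pullmem f⟩ with hρ
  have ρspec : ∀ (f : A) (y : Y), ((ρ f : R) : Y →ᵇ ℂ) y = (f : X →ᵇ ℂ) (υ y) :=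
    fun f y => rfl
  have hFapp : ∀ (χ : characterSpace ℂ R) (f : A),
      (F χ : A → ℂ) f = (χ : R → ℂ) (ρ f) := fun χ f => hF χ f (ρ f) (ρspec f)
  -- evaluation characters on R
  set evR : Y → characterSpace ℂ R := fun y =>
    ⟨{ toFun := fun g : R => (g : Y →ᵇ ℂ) y
       map_add' := fun _ _ => rfl
       map_smul' := fun _ _ => rfl
       cont := (BoundedContinuousFunction.evalCLM (𝕜 := ℂ) y).continuous.comp
         continuous_subtype_val },
     by
       intro h0
       have h1 : ((1 : R) : Y →ᵇ ℂ) y = 0 := congrArg (fun φ : WeakDual ℂ R => φ 1) h0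
       simp at h1,
     fun a b => rfl⟩ with hevR
  have evRspec : ∀ (y : Y) (g : R), (evR y : R → ℂ) g = (g : Y →ᵇ ℂ) y := fun y g => rfl
  -- F ∘ evR = evX ∘ υ
  have hcomp : F ∘ evR = evX ∘ υ := by
    funext y
    apply Subtype.ext
    apply ContinuousLinearMap.ext
    intro f
    show (F (evR y) : A → ℂ) f = (evX (υ y) : A → ℂ) f
    rw [hFapp, evRspec, ρspec, hevX]
  -- F is continuous
  have hFcont : Continuous F := by
    apply continuous_induced_rng.2
    apply WeakDual.continuous_of_continuous_eval
    intro f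
    exact ((WeakDual.eval_continuous (ρ f)).comp continuous_subtype_val).congr
      (fun χ => (hFapp χ f).symm)
  have hclosedF : IsClosed (Set.range F) := (isCompact_range hFcont).isClosed
  -- every character of R lies in the closure of the evaluation characters
  have key : ∀ χ : characterSpace ℂ R, χ ∈ closure (Set.range evR) := by
    intro χ
    by_contra hχ
    obtain ⟨h, h0, h1, -⟩ := exists_continuous_zero_one_of_isClosed
      (isClosed_closure (s := Set.range evR)) isClosed_singleton
      (Set.disjoint_singleton_right.2 hχ)
    set h' : C(characterSpace ℂ R, ℂ) :=
      { toFun := fun x => (h x : ℂ)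
        continuous_toFun := Complex.continuous_ofReal.comp h.continuous } with hh'
    set g : R := (gelfandStarTransform R).symm h' with hg
    have hgel : gelfandStarTransform R g = h' := (gelfandStarTransform R).apply_symm_apply h'
    have hzero : g = 0 := by
      apply Subtype.ext
      apply BoundedContinuousFunction.ext
      intro y
      have e1 : (evR y : R → ℂ) g = h' (evR y) := by
        have := congrArg (fun k : C(characterSpace ℂ R, ℂ) => k (evR y)) hgel
        exact this
      have e2 : h' (evR y) = 0 := by
        have : h (evR y) = 0 := h0 (subset_closure (Set.mem_range_self y))
        simp [hh', this]
      have := e1.trans e2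
      rw [evRspec] at this
      simpa using this
    have hone : h' χ = 1 := by
      have : h χ = 1 := h1 rfl
      simp [hh', this]
    rw [hzero] at hgel
    have : h' χ = 0 := by
      have := congrArg (fun k : C(characterSpace ℂ R, ℂ) => k χ) hgel
      simpa using this.symm
    rw [hone] at this
    exact one_ne_zero this
  -- conclude
  apply Set.Subset.antisymm
  · rintro _ ⟨χ, rfl⟩
    have : F χ ∈ F '' closure (Set.range evR) := ⟨χ, key χ, rfl⟩
    have h2 := (image_closure_subset_closure_image hFcont) this
    have h3 : F '' Set.range evR = Set.range (evX ∘ υ) := by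
      rw [← Set.range_comp, hcomp]
    rwa [h3] at h2
  · apply closure_minimal _ hclosedF
    rintro _ ⟨y, rfl⟩
    exact ⟨evR y, congrFun hcomp y⟩
end

section
/- The cardinality of the Bohr compactification of ℝ is strictly greater than the cardinality of ℝ; in fact it is at least 2^|ℝ| = |P(ℝ)|. -/
open Cardinal
open scoped Classical

/-- The Bohr compactification of `ℝ`, realized as the group of all (not
necessarily continuous) group homomorphisms from `(ℝ, +)` to the circle group
`S¹ ⊆ ℂ`, has cardinality strictly greater than `|ℝ|`; in fact it is at least
`2 ^ |ℝ|`. -/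
theorem stmt12 :
    Cardinal.mk ℝ <
      Cardinal.mk {ψ : ℝ → ℂ // (∀ x : ℝ, ‖ψ x‖ = 1) ∧
        ∀ x y : ℝ, ψ (x + y) = ψ x * ψ y} ∧
    (2 : Cardinal) ^ Cardinal.mk ℝ ≤
      Cardinal.mk {ψ : ℝ → ℂ // (∀ x : ℝ, ‖ψ x‖ = 1) ∧
        ∀ x y : ℝ, ψ (x + y) = ψ x * ψ y} := by
  set T := {ψ : ℝ → ℂ // (∀ x : ℝ, ‖ψ x‖ = 1) ∧
        ∀ x y : ℝ, ψ (x + y) = ψ x * ψ y} with hT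
  have key : (2 : Cardinal) ^ Cardinal.mk ℝ ≤ Cardinal.mk T := by
    let b := Module.Basis.ofVectorSpace ℚ ℝ
    have hb : #(Module.Basis.ofVectorSpaceIndex ℚ ℝ) = #ℝ := by
      rw [b.mk_eq_rank'', Real.rank_rat_real, ← Cardinal.mk_real]
    -- injection from sets of index into T
    let F : Set (Module.Basis.ofVectorSpaceIndex ℚ ℝ) → T := fun S =>
      ⟨fun x => Complex.exp ((b.constr ℚ (fun i => if i ∈ S then Real.pi else 0) x : ℝ) * Complex.I),
        fun x => Complex.norm_exp_ofReal_mul_I _,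
        fun x y => by
          simp only []
          rw [map_add]
          push_cast
          rw [add_mul, Complex.exp_add]⟩
    have hF : Function.Injective F := by
      intro S S' h
      ext i
      by_contra hi
      have h1 : (F S).1 (b i) = (F S').1 (b i) := by rw [h]
      simp only [F, Module.Basis.constr_basis] at h1
      rcases Classical.em (i ∈ S) with hiS | hiS
      · have hiS' : i ∉ S' := fun hx => hi ⟨fun _ => hx, fun _ => hiS⟩
        rw [if_pos hiS, if_neg hiS'] at h1
        simp [Complex.exp_pi_mul_I] at h1
        norm_num at h1
      · have hiS' : i ∈ S' := by
          by_contra hx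
          exact hi ⟨fun hy => absurd hy hiS, fun hy => absurd hy hx⟩
        rw [if_neg hiS, if_pos hiS'] at h1
        simp [Complex.exp_pi_mul_I] at h1
        norm_num at h1
    calc (2 : Cardinal) ^ #ℝ = #(Set (Module.Basis.ofVectorSpaceIndex ℚ ℝ)) := by
            rw [Cardinal.mk_set, hb]
      _ ≤ #T := Cardinal.mk_le_of_injective hF
  exact ⟨lt_of_lt_of_le (Cardinal.cantor _) key, key⟩
end

section
/- The set of all group homomorphisms from (ℝ, +) to the circle group S¹ has cardinality at least 2^𝔠, where 𝔠 = |ℝ|: there is an injection from the power set of a Hamel basis of ℝ over ℚ into Hom(ℝ, S¹). -/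
/-- The set of all group homomorphisms from `(ℝ, +)` to the circle group `S¹`
has cardinality at least `2 ^ 𝔠`: for every Hamel basis (`ℚ`-vector-space
basis) of `ℝ` there is an injection from the power set of the basis index set
into `Hom(ℝ, S¹)`. -/
theorem stmt13 (ι : Type) (b : Module.Basis ι ℚ ℝ) :
    (∃ Ψ : Set ι → {ψ : ℝ → ℂ // (∀ x : ℝ, ‖ψ x‖ = 1) ∧
        ∀ x y : ℝ, ψ (x + y) = ψ x * ψ y}, Function.Injective Ψ) ∧
    (2 : Cardinal) ^ Cardinal.continuum ≤
      Cardinal.mk {ψ : ℝ → ℂ // (∀ x : ℝ, ‖ψ x‖ = 1) ∧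
        ∀ x y : ℝ, ψ (x + y) = ψ x * ψ y} := by
  classical
  -- the ℚ-linear map determined by an indicator-like function on the basis
  set g : Set ι → (ℝ →ₗ[ℚ] ℝ) :=
    fun J => b.constr ℚ (fun α => if α ∈ J then (0 : ℝ) else 1) with hg
  have expI_ne_one : Complex.exp Complex.I ≠ 1 := by
    intro h
    rw [Complex.exp_eq_one_iff] at h
    obtain ⟨n, hn⟩ := h
    have := congrArg Complex.im hn
    simp [Complex.I_im] at this
    have h2 : (1 : ℝ) = n * (2 * Real.pi) := by
      simpa using this
    rcases lt_trichotomy (n : ℝ) 0 with h | h | h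
    · nlinarith [Real.pi_pos]
    · rw [h] at h2; norm_num at h2
    · have : (1 : ℝ) ≤ n := by exact_mod_cast (by exact_mod_cast h : 0 < n)
      nlinarith [Real.pi_gt_three]
  set Ψ : Set ι → {ψ : ℝ → ℂ // (∀ x : ℝ, ‖ψ x‖ = 1) ∧
      ∀ x y : ℝ, ψ (x + y) = ψ x * ψ y} :=
    fun J => ⟨fun x => Complex.exp ((g J x : ℂ) * Complex.I),
      by
        constructor
        · intro x
          rw [Complex.norm_exp]
          simp
        · intro x y
          show Complex.exp _ = _
          rw [← Complex.exp_add]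
          congr 1
          rw [map_add]
          push_cast
          ring⟩ with hΨ
  have hinj : Function.Injective Ψ := by
    intro J J' h
    ext α
    have hval := congrFun (congrArg Subtype.val h) (b α)
    have hgJ : g J (b α) = if α ∈ J then (0 : ℝ) else 1 := by
      simp [hg, Module.Basis.constr_basis]
    have hgJ' : g J' (b α) = if α ∈ J' then (0 : ℝ) else 1 := by
      simp [hg, Module.Basis.constr_basis]
    simp only [hΨ] at hval
    rw [hgJ, hgJ'] at hval
    by_cases hJ : α ∈ J <;> by_cases hJ' : α ∈ J' <;>
      simp [hJ, hJ'] at hval ⊢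
    · exact absurd hval.symm expI_ne_one
    · exact absurd hval expI_ne_one
  refine ⟨⟨Ψ, hinj⟩, ?_⟩
  have hι : Cardinal.mk ι = Cardinal.continuum := by
    have := b.mk_eq_rank''
    rw [this, Real.rank_rat_real]
  calc (2 : Cardinal) ^ Cardinal.continuum = Cardinal.mk (Set ι) := by
        rw [Cardinal.mk_set, hι]
    _ ≤ _ := Cardinal.mk_le_of_injective hinj
end

section
/- There is no topological group structure on the topological space ℝ ⊔ Bohr(ℝ) (the disjoint union of ℝ and the Bohr compactification of ℝ, topologized so that ℝ is open, complements of compact subsets of ℝ together with Bohr(ℝ) are open, and sets of the form f⁻¹(U) ⊔ Γ(f)⁻¹(U) for almost periodic f are open). More generally, no group multiplication ⋆ on ℝ ⊔ Bohr(ℝ) can be (separately) continuous with respect to this topology. -/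
open WeakDual BoundedContinuousFunction
open Topology
set_option synthInstance.maxHeartbeats 1000000

noncomputable section

/-- The C*-algebra `C_AP(ℝ)` of almost periodic functions on `ℝ`: the closed
star subalgebra of `C_b(ℝ)` generated by the characters `χ_τ(x) = e^{iτx}`. -/
def CAP : StarSubalgebra ℂ (ℝ →ᵇ ℂ) :=
  (StarAlgebra.adjoin ℂ
    {f : ℝ →ᵇ ℂ | ∃ τ : ℝ, ∀ x : ℝ,
      f x = Complex.exp (τ * x * Complex.I)}).topologicalClosure

/-- The Bohr compactification of `ℝ`, realized as `Spec(C_AP(ℝ))`. -/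
abbrev Bohr : Type := characterSpace ℂ ↥CAP

/-- The disjoint union `ℝ ⊔ Bohr(ℝ)`. -/
abbrev QSpace : Type := ℝ ⊕ Bohr

/-- The topology on `ℝ ⊔ Bohr(ℝ)` generated by: open subsets of `ℝ`;
complements of compact subsets of `ℝ` together with all of `Bohr(ℝ)`;
and sets `f⁻¹(U) ⊔ Γ(f)⁻¹(U)` for `f ∈ C_AP(ℝ)` and `U ⊆ ℂ` open. -/
instance QSpace.topologicalSpace : TopologicalSpace QSpace :=
  TopologicalSpace.generateFrom
    ({s | ∃ V : Set ℝ, IsOpen V ∧ s = Sum.inl '' V} ∪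
     {s | ∃ K : Set ℝ, IsCompact K ∧ s = Sum.inl '' Kᶜ ∪ Sum.inr '' Set.univ} ∪
     {s | ∃ (f : ↥CAP) (U : Set ℂ), IsOpen U ∧
        s = Sum.inl '' ((fun x : ℝ => (f : ℝ →ᵇ ℂ) x) ⁻¹' U) ∪
            Sum.inr '' ((fun ψ : Bohr => ψ f) ⁻¹' U)})


instance : CompleteSpace ↥CAP := (StarSubalgebra.isClosed_topologicalClosure _).completeSpace_coe

/-- The exponential `x ↦ e^{iτx}` as a bounded continuous function. -/
def expB (τ : ℝ) : ℝ →ᵇ ℂ :=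
  BoundedContinuousFunction.mkOfBound
    ⟨fun x : ℝ => Complex.exp (τ * x * Complex.I), by fun_prop⟩ 2
    (by
      intro x y
      have h : ∀ z : ℝ, ‖Complex.exp (τ * z * Complex.I)‖ = 1 := by
        intro z
        have : (τ : ℂ) * z * Complex.I = ((τ * z : ℝ) : ℂ) * Complex.I := by push_cast; ring
        rw [this, Complex.norm_exp_ofReal_mul_I]
      calc dist (Complex.exp (τ * x * Complex.I)) (Complex.exp (τ * y * Complex.I))
          ≤ ‖Complex.exp (τ * x * Complex.I)‖
            + ‖Complex.exp (τ * y * Complex.I)‖ := by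
            rw [Complex.dist_eq]; exact (norm_sub_le _ _)
        _ = 2 := by rw [h, h]; norm_num)

lemma expB_apply (τ x : ℝ) : expB τ x = Complex.exp (τ * x * Complex.I) := rfl

lemma expB_mem (τ : ℝ) : expB τ ∈ CAP := by
  apply StarSubalgebra.le_topologicalClosure
  exact StarAlgebra.subset_adjoin ℂ _ ⟨τ, fun x => rfl⟩

/-- The exponential as an element of `CAP`. -/
def expC (τ : ℝ) : ↥CAP := ⟨expB τ, expB_mem τ⟩

def evCLM (x : ℝ) : WeakDual ℂ ↥CAP :=
  (BoundedContinuousFunction.evalCLM ℂ x).comp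
    ((Subalgebra.toSubmodule CAP.toSubalgebra).subtypeL)

lemma evCLM_apply (x : ℝ) (f : ↥CAP) : evCLM x f = (f : ℝ →ᵇ ℂ) x := rfl

/-- Point evaluations as characters of `CAP`. -/
def evchar (x : ℝ) : Bohr := by
  refine ⟨evCLM x, ?_, ?_⟩
  · intro h
    have h1 : evCLM x (1 : ↥CAP) = 0 := by rw [h]; rfl
    rw [evCLM_apply] at h1
    simp at h1
  · intro f g
    rw [evCLM_apply, evCLM_apply, evCLM_apply]
    push_cast
    simp

instance : Nonempty Bohr := ⟨evchar 0⟩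

def QGen : Set (Set QSpace) :=
    ({s | ∃ V : Set ℝ, IsOpen V ∧ s = Sum.inl '' V} ∪
     {s | ∃ K : Set ℝ, IsCompact K ∧ s = Sum.inl '' Kᶜ ∪ Sum.inr '' Set.univ} ∪
     {s | ∃ (f : ↥CAP) (U : Set ℂ), IsOpen U ∧
        s = Sum.inl '' ((fun x : ℝ => (f : ℝ →ᵇ ℂ) x) ⁻¹' U) ∪
            Sum.inr '' ((fun ψ : Bohr => ψ f) ⁻¹' U)})

lemma qtop_eq : QSpace.topologicalSpace = TopologicalSpace.generateFrom QGen := rfl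

lemma isOpen_gen1 {V : Set ℝ} (hV : IsOpen V) : IsOpen (Sum.inl '' V : Set QSpace) :=
  TopologicalSpace.isOpen_generateFrom_of_mem (Or.inl (Or.inl ⟨V, hV, rfl⟩))

lemma isOpen_gen2 {K : Set ℝ} (hK : IsCompact K) :
    IsOpen ((Sum.inl '' Kᶜ ∪ Sum.inr '' Set.univ : Set QSpace)) :=
  TopologicalSpace.isOpen_generateFrom_of_mem (Or.inl (Or.inr ⟨K, hK, rfl⟩))

lemma isOpen_gen3 (f : ↥CAP) {U : Set ℂ} (hU : IsOpen U) :
    IsOpen ((Sum.inl '' ((fun x : ℝ => (f : ℝ →ᵇ ℂ) x) ⁻¹' U) ∪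
            Sum.inr '' ((fun ψ : Bohr => ψ f) ⁻¹' U) : Set QSpace)) :=
  TopologicalSpace.isOpen_generateFrom_of_mem (Or.inr ⟨f, U, hU, rfl⟩)

lemma Qcont_inl : Continuous (Sum.inl : ℝ → QSpace) := by
  rw [qtop_eq, continuous_generateFrom_iff]
  rintro s ((⟨V, hV, rfl⟩ | ⟨K, hK, rfl⟩) | ⟨f, U, hU, rfl⟩)
  · rwa [Set.preimage_image_eq _ Sum.inl_injective]
  · have h : Sum.inl ⁻¹' (Sum.inl '' Kᶜ ∪ Sum.inr '' Set.univ : Set QSpace) = Kᶜ := by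
      ext x; simp
    rw [h]
    exact hK.isClosed.isOpen_compl
  · have h : Sum.inl ⁻¹' (Sum.inl '' ((fun x : ℝ => (f : ℝ →ᵇ ℂ) x) ⁻¹' U) ∪
        Sum.inr '' ((fun ψ : Bohr => ψ f) ⁻¹' U) : Set QSpace)
        = (fun x : ℝ => (f : ℝ →ᵇ ℂ) x) ⁻¹' U := by
      ext x; simp
    rw [h]
    exact (map_continuous (f : ℝ →ᵇ ℂ)).isOpen_preimage U hU

lemma continuous_evalB (f : ↥CAP) : Continuous (fun ψ : Bohr => ψ f) :=
  (WeakDual.eval_continuous f).comp continuous_subtype_val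

lemma Qcont_inr : Continuous (Sum.inr : Bohr → QSpace) := by
  rw [qtop_eq, continuous_generateFrom_iff]
  rintro s ((⟨V, hV, rfl⟩ | ⟨K, hK, rfl⟩) | ⟨f, U, hU, rfl⟩)
  · have h : Sum.inr ⁻¹' (Sum.inl '' V : Set QSpace) = ∅ := by ext ψ; simp
    rw [h]; exact isOpen_empty
  · have h : Sum.inr ⁻¹' (Sum.inl '' Kᶜ ∪ Sum.inr '' Set.univ : Set QSpace) = Set.univ := by
      ext ψ; simp
    rw [h]; exact isOpen_univ
  · have h : Sum.inr ⁻¹' (Sum.inl '' ((fun x : ℝ => (f : ℝ →ᵇ ℂ) x) ⁻¹' U) ∪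
        Sum.inr '' ((fun ψ : Bohr => ψ f) ⁻¹' U) : Set QSpace)
        = (fun ψ : Bohr => ψ f) ⁻¹' U := by
      ext ψ; simp
    rw [h]
    exact (continuous_evalB f).isOpen_preimage U hU

lemma QisOpenMap_inl : IsOpenMap (Sum.inl : ℝ → QSpace) := fun V hV => isOpen_gen1 hV

lemma QisOpenEmbedding_inl : IsOpenEmbedding (Sum.inl : ℝ → QSpace) :=
  IsOpenEmbedding.of_continuous_injective_isOpenMap Qcont_inl Sum.inl_injective QisOpenMap_inl

instance : T2Space QSpace := by
  constructor
  rintro (a | ψ) (b | φ) hxy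
  · -- inl / inl
    have hab : a ≠ b := fun h => hxy (by rw [h])
    obtain ⟨u, v, hu, hv, hau, hbv, huv⟩ := t2_separation hab
    exact ⟨Sum.inl '' u, Sum.inl '' v, isOpen_gen1 hu, isOpen_gen1 hv,
      ⟨a, hau, rfl⟩, ⟨b, hbv, rfl⟩,
      (Set.disjoint_image_iff Sum.inl_injective).mpr huv⟩
  · -- inl / inr
    refine ⟨Sum.inl '' Metric.ball a 1,
      Sum.inl '' (Metric.closedBall a 1)ᶜ ∪ Sum.inr '' Set.univ,
      isOpen_gen1 Metric.isOpen_ball, isOpen_gen2 (isCompact_closedBall a 1),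
      ⟨a, by simp, rfl⟩, Or.inr ⟨φ, trivial, rfl⟩, ?_⟩
    rw [Set.disjoint_left]
    rintro z ⟨x, hx, rfl⟩ (⟨y, hy, hz⟩ | ⟨χ, _, hz⟩)
    · rw [Sum.inl.injEq] at hz
      subst hz
      exact hy (Metric.ball_subset_closedBall hx)
    · exact Sum.inl_ne_inr hz.symm
  · -- inr / inl
    refine ⟨Sum.inl '' (Metric.closedBall b 1)ᶜ ∪ Sum.inr '' Set.univ,
      Sum.inl '' Metric.ball b 1,
      isOpen_gen2 (isCompact_closedBall b 1), isOpen_gen1 Metric.isOpen_ball,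
      Or.inr ⟨ψ, trivial, rfl⟩, ⟨b, by simp, rfl⟩, ?_⟩
    rw [Set.disjoint_left]
    rintro z (⟨y, hy, rfl⟩ | ⟨χ, _, rfl⟩) ⟨x, hx, hz⟩
    · rw [Sum.inl.injEq] at hz
      subst hz
      exact hy (Metric.ball_subset_closedBall hx)
    · exact Sum.inl_ne_inr hz
  · -- inr / inr
    have hpf : ∃ f : ↥CAP, ψ f ≠ φ f := by
      by_contra h
      push_neg at h
      exact hxy (by rw [Subtype.ext (ContinuousLinearMap.ext h)])
    obtain ⟨f, hf⟩ := hpf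
    obtain ⟨u, v, hu, hv, hau, hbv, huv⟩ := t2_separation hf
    refine ⟨Sum.inl '' ((fun x : ℝ => (f : ℝ →ᵇ ℂ) x) ⁻¹' u) ∪
        Sum.inr '' ((fun χ : Bohr => χ f) ⁻¹' u),
      Sum.inl '' ((fun x : ℝ => (f : ℝ →ᵇ ℂ) x) ⁻¹' v) ∪
        Sum.inr '' ((fun χ : Bohr => χ f) ⁻¹' v),
      isOpen_gen3 f hu, isOpen_gen3 f hv,
      Or.inr ⟨ψ, hau, rfl⟩, Or.inr ⟨φ, hbv, rfl⟩, ?_⟩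
    rw [Set.disjoint_left]
    rintro z (⟨x, hx, rfl⟩ | ⟨χ, hχ, rfl⟩) (⟨y, hy, hz⟩ | ⟨ξ, hξ, hz⟩)
    · rw [Sum.inl.injEq] at hz; subst hz
      exact Set.disjoint_left.mp huv hx hy
    · exact Sum.inl_ne_inr hz.symm
    · exact Sum.inl_ne_inr hz
    · rw [Sum.inr.injEq] at hz; subst hz
      exact Set.disjoint_left.mp huv hχ hξ

/-- `Sum.inr : Bohr → QSpace` as a homeomorphism onto its range. -/
def inrHomeo : Bohr ≃ₜ Set.range (Sum.inr : Bohr → QSpace) :=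
  @Continuous.homeoOfEquivCompactToT2 _ _ _ _ _ _
    (Equiv.ofInjective _ Sum.inr_injective)
    (Qcont_inr.subtype_mk _)

lemma QisEmbedding_inr : IsEmbedding (Sum.inr : Bohr → QSpace) := by
  have h : (Sum.inr : Bohr → QSpace) = Subtype.val ∘ inrHomeo := rfl
  rw [h]
  exact IsEmbedding.subtypeVal.comp inrHomeo.isEmbedding

instance : SecondCountableTopology ↥(Set.range (Sum.inl : ℝ → QSpace)) :=
  (QisOpenEmbedding_inl.isEmbedding.toHomeomorph).symm.isEmbedding.secondCountableTopology

set_option synthInstance.maxHeartbeats 1000000 in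
instance : LocallyCompactSpace Bohr := WeaklyLocallyCompactSpace.locallyCompactSpace

/-- The Gelfand transform of the exponential, as a continuous function on `Bohr`. -/
def expHat (τ : ℝ) : C(Bohr, ℂ) := ⟨fun ψ => ψ (expC τ), continuous_evalB (expC τ)⟩

lemma expHat_evchar (τ x : ℝ) : expHat τ (evchar x) = Complex.exp (τ * x * Complex.I) := rfl

lemma dist_expHat {τ σ : ℝ} (h : τ ≠ σ) : 2 ≤ dist (expHat τ) (expHat σ) := by
  set x : ℝ := Real.pi / (τ - σ) with hxdef
  have hts : τ - σ ≠ 0 := sub_ne_zero.mpr h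
  have hx : (τ - σ) * x = Real.pi := mul_div_cancel₀ _ hts
  have hexp : Complex.exp (τ * x * Complex.I) = - Complex.exp (σ * x * Complex.I) := by
    have h1 : (τ : ℂ) * x * Complex.I = (σ : ℂ) * x * Complex.I + Real.pi * Complex.I := by
      have : (τ : ℂ) * x = (σ : ℂ) * x + Real.pi := by
        have := congrArg (fun t : ℝ => (t : ℂ)) hx
        push_cast at this ⊢
        linear_combination this
      rw [this]
      ring
    rw [h1, Complex.exp_add, Complex.exp_pi_mul_I]
    ring
  have key : dist (expHat τ (evchar x)) (expHat σ (evchar x)) = 2 := by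
    rw [expHat_evchar, expHat_evchar, hexp, Complex.dist_eq]
    have : -Complex.exp (σ * x * Complex.I) - Complex.exp (σ * x * Complex.I)
        = (-2) * Complex.exp (σ * x * Complex.I) := by ring
    rw [this, norm_mul]
    have h2 : (σ : ℂ) * x * Complex.I = ((σ * x : ℝ) : ℂ) * Complex.I := by push_cast; ring
    rw [h2, Complex.norm_exp_ofReal_mul_I]
    simp
  calc (2:ℝ) = dist (expHat τ (evchar x)) (expHat σ (evchar x)) := key.symm
    _ ≤ dist (expHat τ) (expHat σ) := ContinuousMap.dist_apply_le_dist _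

lemma Bohr_not_secondCountable : ¬ SecondCountableTopology Bohr := by
  intro hsc
  have hsep : TopologicalSpace.SeparableSpace C(Bohr, ℂ) := ContinuousMap.instSeparableSpace
  obtain ⟨s, hsc', hsd⟩ := hsep.exists_countable_dense
  have hchoice : ∀ τ : ℝ, ∃ g ∈ s, dist (expHat τ) g < 1 := by
    intro τ
    obtain ⟨g, hg, hgs⟩ := Metric.dense_iff.mp hsd (expHat τ) 1 one_pos
    exact ⟨g, hgs, by rwa [Metric.mem_ball, dist_comm] at hg⟩
  choose g hgs hgd using hchoice
  have hginj : Function.Injective g := by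
    intro τ σ hg
    by_contra h
    have h2 : (2:ℝ) ≤ dist (expHat τ) (expHat σ) := dist_expHat h
    have : dist (expHat τ) (expHat σ) ≤ dist (expHat τ) (g τ) + dist (g σ) (expHat σ) := by
      rw [hg]
      exact dist_triangle _ _ _
    have : dist (expHat τ) (expHat σ) < 2 := by
      have := hgd τ; have := hgd σ
      calc dist (expHat τ) (expHat σ)
          ≤ dist (expHat τ) (g τ) + dist (g σ) (expHat σ) := by rw [hg]; exact dist_triangle _ _ _
        _ < 1 + 1 := by
            have hστ := hgd σ
            rw [dist_comm] at hστ
            exact add_lt_add (hgd τ) hστ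
        _ = 2 := by norm_num
    linarith
  have : Countable ℝ := by
    haveI := hsc'.to_subtype
    exact Function.Injective.countable
      (f := fun τ : ℝ => (⟨g τ, hgs τ⟩ : ↥s))
      (fun a b hab => hginj (congrArg Subtype.val hab))
  exact Cardinal.not_countable_real (Set.countable_univ)

/-- There is no (even just separately continuous) group structure on the space
`ℝ ⊔ Bohr(ℝ)`: no multiplication with unit and inverses can have all left and
right translations continuous. -/
theorem stmt14 (mul : QSpace → QSpace → QSpace) (e : QSpace) (inv : QSpace → QSpace)
    (h_assoc : ∀ a b c : QSpace, mul (mul a b) c = mul a (mul b c))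
    (h_one_mul : ∀ a : QSpace, mul e a = a)
    (h_mul_one : ∀ a : QSpace, mul a e = a)
    (h_inv_mul : ∀ a : QSpace, mul (inv a) a = e)
    (h_cont_left : ∀ a : QSpace, Continuous (mul a))
    (h_cont_right : ∀ a : QSpace, Continuous fun x : QSpace => mul x a) :
    False := by
  classical
  -- two-sided inverse
  have h_mul_inv : ∀ a, mul a (inv a) = e := by
    intro a
    have h3 : mul (inv a) (mul a (inv a)) = inv a := by
      rw [← h_assoc, h_inv_mul, h_one_mul]
    have h2 : mul (inv (inv a)) (mul (inv a) (mul a (inv a))) = mul a (inv a) := by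
      rw [← h_assoc, h_inv_mul, h_one_mul]
    rw [h3, h_inv_mul] at h2
    exact h2.symm
  have h_left_inv : ∀ a x, mul (inv a) (mul a x) = x := fun a x => by
    rw [← h_assoc, h_inv_mul, h_one_mul]
  have h_right_inv : ∀ a x, mul a (mul (inv a) x) = x := fun a x => by
    rw [← h_assoc, h_mul_inv, h_one_mul]
  -- translations as homeomorphisms
  let tr : QSpace → QSpace ≃ₜ QSpace := fun a =>
    { toFun := mul a
      invFun := mul (inv a)
      left_inv := h_left_inv a
      right_inv := h_right_inv a
      continuous_toFun := h_cont_left a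
      continuous_invFun := h_cont_left (inv a) }
  -- translates of the copy of ℝ
  set U : QSpace → Set QSpace := fun g => mul g '' Set.range (Sum.inl : ℝ → QSpace) with hUdef
  have hUopen : ∀ g, IsOpen (U g) := fun g =>
    (tr g).isOpenMap _ QisOpenEmbedding_inl.isOpen_range
  have hUsc : ∀ g, SecondCountableTopology ↥(U g) := by
    intro g
    have e1 : ↥(Set.range (Sum.inl : ℝ → QSpace)) ≃ₜ ↥(U g) :=
      (tr g).image (Set.range (Sum.inl : ℝ → QSpace))
    exact e1.symm.isEmbedding.secondCountableTopology
  -- the translates cover the Bohr part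
  have hYcomp : IsCompact (Set.range (Sum.inr : Bohr → QSpace)) := by
    rw [← Set.image_univ]
    exact isCompact_univ.image Qcont_inr
  have hcover : Set.range (Sum.inr : Bohr → QSpace) ⊆ ⋃ g, U g := by
    rintro _ ⟨ψ, rfl⟩
    refine Set.mem_iUnion.mpr ⟨mul (Sum.inr ψ) (inv (Sum.inl 0)), Sum.inl 0, ⟨0, rfl⟩, ?_⟩
    rw [h_assoc, h_inv_mul, h_mul_one]
  obtain ⟨t, ht⟩ := hYcomp.elim_finite_subcover U hUopen hcover
  -- Bohr is covered by finitely many open second countable pieces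
  let V : ↥t → Set Bohr := fun i => Sum.inr ⁻¹' (U i)
  have hVopen : ∀ i, IsOpen (V i) := fun i => (hUopen i).preimage Qcont_inr
  have hVsc : ∀ i, SecondCountableTopology ↥(V i) := by
    intro i
    haveI := hUsc (i : QSpace)
    have hemb : IsEmbedding (fun ψ : ↥(V i) => (⟨Sum.inr ψ.1, ψ.2⟩ : ↥(U i))) := by
      refine IsEmbedding.of_comp (g := (Subtype.val : ↥(U (i : QSpace)) → QSpace))
        ((Qcont_inr.comp continuous_subtype_val).subtype_mk _) continuous_subtype_val ?_
      exact QisEmbedding_inr.comp IsEmbedding.subtypeVal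
    exact hemb.secondCountableTopology
  have hVcover : ⋃ i, V i = Set.univ := by
    ext ψ
    simp only [Set.mem_univ, iff_true, Set.mem_iUnion]
    have : Sum.inr ψ ∈ ⋃ g ∈ t, U g := ht ⟨ψ, rfl⟩
    obtain ⟨g, hgt, hmem⟩ := Set.mem_iUnion₂.mp this
    exact ⟨⟨g, hgt⟩, hmem⟩
  haveI : ∀ i, SecondCountableTopology ↥(V i) := hVsc
  have hsc : SecondCountableTopology Bohr :=
    TopologicalSpace.secondCountableTopology_of_countable_cover hVopen hVcover
  exact Bohr_not_secondCountable hsc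
end
end

section
/- Let ξ : ℝ ⊔ Bohr(ℝ) → Spec(C₀(ℝ) ⊕ C_AP(ℝ)) be the canonical homeomorphism, given by evaluation at y for y ∈ ℝ and by (f₀ ⊕ f₁) ↦ ψ(f₁) for ψ ∈ Bohr(ℝ). Then ξ(x̄)(χ_τ) = 1 for all τ ∈ ℝ if and only if x̄ is either 0 ∈ ℝ or the identity element 0_Bohr of Bohr(ℝ). -/
open WeakDual BoundedContinuousFunction

noncomputable section

instance : IsClosed (CAP : Set (ℝ →ᵇ ℂ)) := StarSubalgebra.isClosed_topologicalClosure _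

def chi (τ : ℝ) : ℝ →ᵇ ℂ :=
  BoundedContinuousFunction.mkOfBound
    ⟨fun x => Complex.exp (τ * x * Complex.I), by fun_prop⟩ 2
    (fun x y => by
      refine (dist_le_norm_add_norm _ _).trans ?_
      have h : ∀ t : ℝ, ‖Complex.exp (↑τ * ↑t * Complex.I)‖ = 1 := fun t => by
        rw [show ((τ:ℂ) * t * Complex.I) = ((τ*t : ℝ):ℂ) * Complex.I by push_cast; ring,
          Complex.norm_exp_ofReal_mul_I]
      simp only [ContinuousMap.coe_mk, h]; norm_num)

@[simp] lemma chi_apply (τ x : ℝ) : chi τ x = Complex.exp (τ * x * Complex.I) := rfl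

lemma chi_mem_gens (τ : ℝ) : chi τ ∈
    {f : ℝ →ᵇ ℂ | ∃ τ : ℝ, ∀ x : ℝ, f x = Complex.exp (τ * x * Complex.I)} :=
  ⟨τ, fun _ => rfl⟩

lemma chi_mem_CAP (τ : ℝ) : chi τ ∈ CAP :=
  StarSubalgebra.le_topologicalClosure _ (StarAlgebra.subset_adjoin ℂ _ (chi_mem_gens τ))

lemma gens_eq_chi {h : ℝ →ᵇ ℂ} (hg : ∃ τ : ℝ, ∀ x : ℝ, h x = Complex.exp (τ * x * Complex.I)) :
    ∃ τ : ℝ, h = chi τ := by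
  obtain ⟨τ, hτ⟩ := hg
  exact ⟨τ, BoundedContinuousFunction.ext fun x => hτ x⟩

set_option maxHeartbeats 1000000 in
set_option synthInstance.maxHeartbeats 200000 in
lemma chars_ext (ψ φ : Bohr)
    (H : ∀ τ : ℝ, (ψ : ↥CAP → ℂ) ⟨chi τ, chi_mem_CAP τ⟩ = (φ : ↥CAP → ℂ) ⟨chi τ, chi_mem_CAP τ⟩) :
    ψ = φ := by
  refine StarAlgHomClass.ext_topologicalClosure (R := ℂ) (A := ℝ →ᵇ ℂ)
    (map_continuous ψ) (map_continuous φ) ?_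
  intro x
  induction x using StarAlgebra.adjoin_induction_subtype with
  | mem x hx =>
      obtain ⟨τ, hchi⟩ := gens_eq_chi hx
      subst hchi
      exact H τ
  | algebraMap r => exact (AlgHomClass.commutes ψ r).trans (AlgHomClass.commutes φ r).symm
  | add x y hx hy =>
      rw [map_add (StarSubalgebra.inclusion (StarSubalgebra.le_topologicalClosure _)) x y,
        ]
      exact (map_add ψ _ _).trans ((congrArg₂ (· + ·) hx hy).trans (map_add φ _ _).symm)
  | mul x y hx hy =>
      rw [map_mul (StarSubalgebra.inclusion (StarSubalgebra.le_topologicalClosure _)) x y,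
        ]
      exact (map_mul ψ _ _).trans ((congrArg₂ (· * ·) hx hy).trans (map_mul φ _ _).symm)
  | star x hx =>
      rw [map_star (StarSubalgebra.inclusion (StarSubalgebra.le_topologicalClosure _)) x,
        ]
      exact (map_star ψ _).trans ((congrArg star hx).trans (map_star φ _).symm)
lemma chi_mem_D (D : StarSubalgebra ℂ (ℝ →ᵇ ℂ))
    (hD : (D : Set (ℝ →ᵇ ℂ)) =
      {f : ℝ →ᵇ ℂ | ∃ (g : ZeroAtInftyContinuousMap ℝ ℂ) (h : ℝ →ᵇ ℂ),
        h ∈ CAP ∧ f = g.toBCF + h}) (τ : ℝ) : chi τ ∈ D := by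
  have : chi τ ∈ (D : Set (ℝ →ᵇ ℂ)) := by
    rw [hD]
    exact ⟨0, chi τ, chi_mem_CAP τ, by ext x; simp⟩
  exact this

/-- Let `ξ : ℝ ⊔ Bohr(ℝ) → Spec(C₀(ℝ) ⊕ C_AP(ℝ))` be the canonical map, given
by evaluation at `y` for `y ∈ ℝ` and by `f₀ ⊕ f₁ ↦ ψ(f₁)` for `ψ ∈ Bohr(ℝ)`.
Then `ξ(x̄)(χ_τ) = 1` for all `τ ∈ ℝ` iff `x̄` is `0 ∈ ℝ` or the identity
`0_Bohr` of `Bohr(ℝ)` (the evaluation character at `0`). -/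
theorem stmt16
    (D : StarSubalgebra ℂ (ℝ →ᵇ ℂ))
    (hD : (D : Set (ℝ →ᵇ ℂ)) =
      {f : ℝ →ᵇ ℂ | ∃ (g : ZeroAtInftyContinuousMap ℝ ℂ) (h : ℝ →ᵇ ℂ),
        h ∈ CAP ∧ f = g.toBCF + h})
    (ξ : QSpace → characterSpace ℂ ↥D)
    (hξR : ∀ (y : ℝ) (f : ↥D), (ξ (Sum.inl y) : ↥D → ℂ) f = (f : ℝ →ᵇ ℂ) y)
    (hξB : ∀ (ψ : Bohr) (f : ↥D) (g : ZeroAtInftyContinuousMap ℝ ℂ)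
        (h : ℝ →ᵇ ℂ) (hh : h ∈ CAP),
        (f : ℝ →ᵇ ℂ) = g.toBCF + h →
          (ξ (Sum.inr ψ) : ↥D → ℂ) f = (ψ : ↥CAP → ℂ) ⟨h, hh⟩)
    (zB : Bohr) (hzB : ∀ h : ↥CAP, (zB : ↥CAP → ℂ) h = (h : ℝ →ᵇ ℂ) 0) :
    ∀ xbar : QSpace,
      (∀ (τ : ℝ) (f : ↥D),
          (∀ x : ℝ, (f : ℝ →ᵇ ℂ) x = Complex.exp (τ * x * Complex.I)) →
            (ξ xbar : ↥D → ℂ) f = 1) ↔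
        (xbar = Sum.inl (0 : ℝ) ∨ xbar = Sum.inr zB) := by
  intro xbar
  constructor
  · intro H
    match xbar with
    | Sum.inl y =>
        left
        by_contra hne
        have hy : y ≠ 0 := fun h => hne (by rw [h])
        have h1 : chi (Real.pi / y) y = 1 := by
          rw [← hξR y ⟨chi (Real.pi / y), chi_mem_D D hD _⟩]
          exact H (Real.pi / y) _ (fun x => rfl)
        have hyc : (y : ℂ) ≠ 0 := Complex.ofReal_ne_zero.mpr hy
        rw [chi_apply, show ((Real.pi / y : ℝ) : ℂ) * (y : ℂ) * Complex.I
          = (Real.pi : ℂ) * Complex.I by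
            push_cast; rw [div_mul_cancel₀ _ hyc],
          Complex.exp_pi_mul_I] at h1
        norm_num at h1
    | Sum.inr ψ =>
        right
        have hψ : ∀ τ : ℝ, (ψ : ↥CAP → ℂ) ⟨chi τ, chi_mem_CAP τ⟩ = 1 := by
          intro τ
          rw [← hξB ψ ⟨chi τ, chi_mem_D D hD τ⟩ 0 (chi τ) (chi_mem_CAP τ) (by ext x; simp)]
          exact H τ _ (fun x => rfl)
        have : ψ = zB := by
          apply chars_ext
          intro τ
          rw [hψ τ, hzB]
          simp
        rw [this]
  · rintro (rfl | rfl)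
    · intro τ f hf
      rw [hξR 0 f, hf 0]
      simp
    · intro τ f hf
      have hfe : (f : ℝ →ᵇ ℂ) = (0 : ZeroAtInftyContinuousMap ℝ ℂ).toBCF + chi τ := by
        ext x; simp [hf x]
      rw [hξB zB f 0 (chi τ) (chi_mem_CAP τ) hfe, hzB]
      simp


end
end
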